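/- Let m ≥ 2 be an integer, let L > 0, and let g : [0,1]² → ℝ satisfy |g(s,t) − g(s',t')| ≤ L(|s − s'| + |t − t'|) for all (s,t), (s',t') ∈ [0,1]². Then for every (u,v) ∈ [0,1]², |Σ_{k=0}^{m-1} Σ_{ℓ=0}^m g(k/(m−1), ℓ/m) P_{m-1,k}(u) P_{m,ℓ}(v) − g(u,v)| ≤ L(√(u(1−u)/(m−1)) + √(v(1−v)/m)). -/
import Mathlib


open Finset

/-- The Bernstein basis polynomial `P_{m,k}(u) = C(m,k) u^k (1-u)^{m-k}`. -/
noncomputable def bern (m k : ℕ) (u : ℝ) : ℝ :=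
  (m.choose k : ℝ) * u ^ k * (1 - u) ^ (m - k)

lemma bern_eq_eval (n k : ℕ) (x : ℝ) :
    bern n k x = (bernsteinPolynomial ℝ n k).eval x := by
  simp [bern, bernsteinPolynomial]

lemma bern_nonneg (n k : ℕ) {x : ℝ} (hx : x ∈ Set.Icc (0:ℝ) 1) : 0 ≤ bern n k x := by
  obtain ⟨h0, h1⟩ := hx
  have h2 : (0:ℝ) ≤ 1 - x := by linarith
  exact mul_nonneg (mul_nonneg (by positivity) (pow_nonneg h0 _)) (pow_nonneg h2 _)

lemma bern_sum (n : ℕ) (x : ℝ) : ∑ k ∈ range (n + 1), bern n k x = 1 := by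
  have := bernsteinPolynomial.sum ℝ n
  have h := congrArg (Polynomial.eval x) this
  simpa [bern_eq_eval, Polynomial.eval_finset_sum] using h

lemma bern_variance (n : ℕ) (hn : 0 < n) (x : ℝ) :
    ∑ k ∈ range (n + 1), ((k : ℝ) / n - x) ^ 2 * bern n k x = x * (1 - x) / n := by
  have hn' : (0:ℝ) < n := by exact_mod_cast hn
  have hn'' : (n:ℝ) ≠ 0 := ne_of_gt hn'
  have := bernsteinPolynomial.variance ℝ n
  have h := congrArg (Polynomial.eval x) this
  simp only [Polynomial.eval_finset_sum, Polynomial.eval_mul, Polynomial.eval_pow,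
    Polynomial.eval_sub, Polynomial.eval_natCast, nsmul_eq_mul, Polynomial.eval_one,
    Polynomial.eval_X] at h
  have key : ∀ k ∈ range (n+1), ((k : ℝ) / n - x) ^ 2 * bern n k x
      = (1 / (n:ℝ)^2) * (((n:ℝ) * x - k) ^ 2 * (bernsteinPolynomial ℝ n k).eval x) := by
    intro k _
    rw [← bern_eq_eval]
    have e : ((k : ℝ) / n - x) = ((k : ℝ) - n * x) / n := by field_simp
    rw [e, div_pow, show ((k:ℝ) - n*x)^2 = ((n:ℝ)*x - k)^2 by ring]
    field_simp
  rw [Finset.sum_congr rfl key, ← Finset.mul_sum, h]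
  field_simp

lemma bern_abs_sum (n : ℕ) (hn : 0 < n) {x : ℝ} (hx : x ∈ Set.Icc (0:ℝ) 1) :
    ∑ k ∈ range (n + 1), |(k : ℝ) / n - x| * bern n k x
      ≤ Real.sqrt (x * (1 - x) / n) := by
  set S := ∑ k ∈ range (n + 1), |(k : ℝ) / n - x| * bern n k x with hS
  have hSnn : 0 ≤ S := Finset.sum_nonneg fun k _ =>
    mul_nonneg (abs_nonneg _) (bern_nonneg n k hx)
  have hsq : S ^ 2 ≤ x * (1 - x) / n := by
    have := Finset.sum_sq_le_sum_mul_sum_of_sq_eq_mul (range (n+1))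
      (r := fun k => |(k : ℝ) / n - x| * bern n k x)
      (f := fun k => bern n k x)
      (g := fun k => ((k : ℝ) / n - x) ^ 2 * bern n k x)
      (fun k _ => bern_nonneg n k hx)
      (fun k _ => mul_nonneg (sq_nonneg _) (bern_nonneg n k hx))
      (fun k _ => by rw [mul_pow, sq_abs]; ring)
    rw [bern_sum, bern_variance n hn, one_mul] at this
    exact this
  calc S = Real.sqrt (S ^ 2) := by rw [Real.sqrt_sq hSnn]
    _ ≤ Real.sqrt (x * (1 - x) / n) := Real.sqrt_le_sqrt hsq

/-- Let `m ≥ 2`, `L > 0` and let `g : [0,1]² → ℝ` be `L`-Lipschitz in the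
sense that `|g(s,t) − g(s',t')| ≤ L(|s − s'| + |t − t'|)` on `[0,1]²`. Then for every
`(u,v) ∈ [0,1]²`,
`|Σ_{k=0}^{m-1} Σ_{ℓ=0}^m g(k/(m−1), ℓ/m) P_{m-1,k}(u) P_{m,ℓ}(v) − g(u,v)|
  ≤ L(√(u(1−u)/(m−1)) + √(v(1−v)/m))`. -/
theorem bernstein_lipschitz_approx (m : ℕ) (hm : 2 ≤ m) (L : ℝ) (hL : 0 < L) (g : ℝ → ℝ → ℝ)
    (hg : ∀ s ∈ Set.Icc (0:ℝ) 1, ∀ t ∈ Set.Icc (0:ℝ) 1, ∀ s' ∈ Set.Icc (0:ℝ) 1,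
      ∀ t' ∈ Set.Icc (0:ℝ) 1, |g s t - g s' t'| ≤ L * (|s - s'| + |t - t'|))
    (u : ℝ) (hu : u ∈ Set.Icc (0:ℝ) 1) (v : ℝ) (hv : v ∈ Set.Icc (0:ℝ) 1) :
    |(∑ k ∈ Finset.range m, ∑ l ∈ Finset.range (m + 1),
        g ((k : ℝ) / ((m : ℝ) - 1)) ((l : ℝ) / m) * bern (m - 1) k u * bern m l v) - g u v|
      ≤ L * (Real.sqrt (u * (1 - u) / ((m : ℝ) - 1)) + Real.sqrt (v * (1 - v) / m)) := by
  set K := m - 1 with hK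
  have hKm : m = K + 1 := by omega
  have hK1 : 0 < K := by omega
  have hm0 : 0 < m := by omega
  have hKcast : ((m : ℝ) - 1) = (K : ℝ) := by rw [hKm]; push_cast; ring
  have hKpos : (0:ℝ) < K := by exact_mod_cast hK1
  have hmpos : (0:ℝ) < m := by exact_mod_cast hm0
  have hrangem : Finset.range m = Finset.range (K + 1) := by rw [hKm]
  have hnodeK : ∀ k ∈ range (K + 1), (k : ℝ) / K ∈ Set.Icc (0:ℝ) 1 := by
    intro k hk
    rw [Finset.mem_range] at hk
    constructor
    · positivity
    · rw [div_le_one hKpos]; exact_mod_cast Nat.lt_succ_iff.mp hk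
  have hnodem : ∀ l ∈ range (m + 1), (l : ℝ) / m ∈ Set.Icc (0:ℝ) 1 := by
    intro l hl
    rw [Finset.mem_range] at hl
    constructor
    · positivity
    · rw [div_le_one hmpos]; exact_mod_cast Nat.lt_succ_iff.mp hl
  have hPnn : ∀ k, 0 ≤ bern K k u := fun k => bern_nonneg K k hu
  have hQnn : ∀ l, 0 ≤ bern m l v := fun l => bern_nonneg m l hv
  have hPsum : ∑ k ∈ range (K + 1), bern K k u = 1 := bern_sum K u
  have hQsum : ∑ l ∈ range (m + 1), bern m l v = 1 := bern_sum m v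
  rw [hrangem, hKcast]
  -- rewrite g u v as a double sum
  have hgv : ∑ k ∈ range (K+1), ∑ l ∈ range (m+1), g u v * (bern K k u * bern m l v)
      = g u v := by
    simp_rw [← Finset.mul_sum, hQsum, mul_one, hPsum, mul_one]
  have hrw : (∑ k ∈ Finset.range (K + 1), ∑ l ∈ Finset.range (m + 1),
        g ((k : ℝ) / K) ((l : ℝ) / m) * bern K k u * bern m l v) - g u v
      = ∑ k ∈ range (K + 1), ∑ l ∈ range (m + 1),
        (g ((k : ℝ) / K) ((l : ℝ) / m) - g u v) * (bern K k u * bern m l v) := by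
    have expand : ∑ k ∈ range (K + 1), ∑ l ∈ range (m + 1),
          (g ((k : ℝ) / K) ((l : ℝ) / m) - g u v) * (bern K k u * bern m l v)
        = (∑ k ∈ range (K + 1), ∑ l ∈ range (m + 1),
            g ((k : ℝ) / K) ((l : ℝ) / m) * bern K k u * bern m l v)
          - ∑ k ∈ range (K+1), ∑ l ∈ range (m+1), g u v * (bern K k u * bern m l v) := by
      rw [← Finset.sum_sub_distrib]
      refine Finset.sum_congr rfl fun k _ => ?_
      rw [← Finset.sum_sub_distrib]
      refine Finset.sum_congr rfl fun l _ => ?_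
      ring
    rw [expand, hgv]
  rw [hrw]
  -- main estimate
  have habs : |∑ k ∈ range (K + 1), ∑ l ∈ range (m + 1),
        (g ((k : ℝ) / K) ((l : ℝ) / m) - g u v) * (bern K k u * bern m l v)|
      ≤ ∑ k ∈ range (K + 1), ∑ l ∈ range (m + 1),
        L * (|(k : ℝ) / K - u| + |(l : ℝ) / m - v|) * (bern K k u * bern m l v) := by
    refine (Finset.abs_sum_le_sum_abs _ _).trans ?_
    refine Finset.sum_le_sum fun k hk => ?_
    refine (Finset.abs_sum_le_sum_abs _ _).trans ?_
    refine Finset.sum_le_sum fun l hl => ?_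
    rw [abs_mul, abs_of_nonneg (mul_nonneg (hPnn k) (hQnn l))]
    exact mul_le_mul_of_nonneg_right
      (hg _ (hnodeK k hk) _ (hnodem l hl) u hu v hv)
      (mul_nonneg (hPnn k) (hQnn l))
  refine habs.trans ?_
  -- split the double sum
  have hsplit : ∑ k ∈ range (K + 1), ∑ l ∈ range (m + 1),
        L * (|(k : ℝ) / K - u| + |(l : ℝ) / m - v|) * (bern K k u * bern m l v)
      = L * ((∑ k ∈ range (K + 1), |(k : ℝ) / K - u| * bern K k u)
              * (∑ l ∈ range (m + 1), bern m l v)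
           + (∑ k ∈ range (K + 1), bern K k u)
              * (∑ l ∈ range (m + 1), |(l : ℝ) / m - v| * bern m l v)) := by
    rw [mul_add, Finset.sum_mul_sum, Finset.sum_mul_sum, Finset.mul_sum, Finset.mul_sum,
      ← Finset.sum_add_distrib]
    refine Finset.sum_congr rfl fun k _ => ?_
    rw [Finset.mul_sum, Finset.mul_sum, ← Finset.sum_add_distrib]
    refine Finset.sum_congr rfl fun l _ => ?_
    ring
  rw [hsplit, hPsum, hQsum, mul_one, one_mul]
  have h1 := bern_abs_sum K hK1 hu
  have h2 := bern_abs_sum m hm0 hv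
  have := add_le_add h1 h2
  exact mul_le_mul_of_nonneg_left this hL.le
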